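/- There is a universal constant C > 0 with the following property. For every τ ∈ (0,1), every horizontally valid two-dimensional move g with g + gᵀ = t_τ, and every a ∈ [3,5]: ∑_{b : |b − a| < C·√τ} ĝ_b(a,a) ≥ 2/3, where the sum ranges over the (finitely many) values b ≥ 0 with |b − a| < C·√τ for which g_b is nonzero. -/

import Mathlib

open scoped BigOperators Classical

noncomputable section

/-- The profile `P_x` of a point `x ∈ ℝ≥0`, viewed as a function on `[1,∞]`
(the extended reals `EReal` model the interval with its point `∞ = ⊤`):
`P_x(α) = 1` for `α ∈ [1,2)`, `P_x(α) = (xα - x)/(x + α - 2)` for `α ∈ [2,∞)`,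
and `P_x(∞) = x` (with the conventions `P_0(α) = 0` for `α ∈ [2,∞]`, which the
formula also yields since division by zero is zero). -/
def Pfun (x : ℝ) (α : EReal) : ℝ :=
  if α = ⊤ then x
  else if α.toReal < 2 then 1
  else (x * α.toReal - x) / (x + α.toReal - 2)

/-- A one-dimensional move: a finitely supported function on `ℝ≥0`
(modeled as a function on `ℝ` vanishing on the negatives). -/
def IsMove1 (f : ℝ → ℝ) : Prop :=
  (Function.support f).Finite ∧ ∀ x : ℝ, x < 0 → f x = 0

/-- Validity of a one-dimensional move. -/
def IsValid1 (f : ℝ → ℝ) : Prop :=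
  (∑ᶠ x, f x) = 0 ∧
  (∀ lam : ℝ, 0 < lam → 0 ≤ ∑ᶠ x, (x / (x + lam)) * f x) ∧
  0 ≤ ∑ᶠ x, x * f x

/-- The profile of a one-dimensional move. -/
def prof1 (f : ℝ → ℝ) (α : EReal) : ℝ := ∑ᶠ x, f x * Pfun x α

/-- A two-dimensional move: a finitely supported function on `ℝ≥0 × ℝ≥0`. -/
def IsMove2 (q : ℝ × ℝ → ℝ) : Prop :=
  (Function.support q).Finite ∧ ∀ p : ℝ × ℝ, p.1 < 0 ∨ p.2 < 0 → q p = 0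

/-- A two-dimensional move is horizontally valid if all of its rows are valid. -/
def HorizValid (q : ℝ × ℝ → ℝ) : Prop := ∀ y : ℝ, IsValid1 fun x => q (x, y)

/-- A two-dimensional move is vertically valid if all of its columns are valid. -/
def VertValid (q : ℝ × ℝ → ℝ) : Prop := ∀ x : ℝ, IsValid1 fun y => q (x, y)

/-- The two-variable profile of a two-dimensional move. -/
def prof2 (q : ℝ × ℝ → ℝ) (α β : EReal) : ℝ :=
  ∑ᶠ p : ℝ × ℝ, q p * Pfun p.1 α * Pfun p.2 β

/-- The transpose move `qᵀ(x,y) = q(y,x)`. -/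
def transpose (q : ℝ × ℝ → ℝ) : ℝ × ℝ → ℝ := fun p => q (p.2, p.1)

/-- `pt x y` is the indicator move `⟦x,y⟧`. -/
def pt (x y : ℝ) : ℝ × ℝ → ℝ := fun p => if p = (x, y) then 1 else 0

/-- The move `t_τ = 2·⟦1,1⟧ - ⟦2-τ,0⟧ - ⟦0,2-τ⟧`. -/
def tMove (τ : ℝ) : ℝ × ℝ → ℝ :=
  fun p => 2 * pt 1 1 p - pt (2 - τ) 0 p - pt 0 (2 - τ) p

/-- `slice g b` is the move `g_b`: the part of `g` on the horizontal line `y = b`. -/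
def hslice (g : ℝ × ℝ → ℝ) (b : ℝ) : ℝ × ℝ → ℝ := fun p => if p.2 = b then g p else 0

/-!
Write `ρ(b)` for the profile at `a` of the row `x ↦ g(x,b)`, so that `ĝ_b(a,a) = P_b(a) ρ(b)`,
and `ρ ≥ 0` by validity of the rows. Evaluating `ĝ(α,β) + ĝ(β,α) = t̂_τ(α,β)` at `(a,a)`, `(a,1)`
and `(a,∞)` gives `∑ P_b(a) ρ(b) = 1`, `∑ ρ(b) = 2 - P_{2-τ}(a)` and `∑ b ρ(b) ≤ 2`. The map
`b ↦ P_b(a)` is concave, and these three moments show that its gap to its tangent line at `b = a`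
has `ρ`-mass `O(τ)`. As `P_b(a) / gap(b) = 4(a-1)² b / ((a-2)(b-a)²)`, on the rows with
`|b - a| ≥ C√τ` the weight `P_b(a)` is at most `O(1/(C²τ) + 1/(C√τ))` times the gap, so these
rows carry at most `O(1/C)` of the total mass `1`.
-/

open Function

lemma finsum_mem_add_finsum_mem_compl {α M : Type*} [AddCommMonoid M] {f : α → M}
    (hf : HasFiniteSupport f) (s : Set α) : ∑ᶠ x ∈ s, f x + ∑ᶠ x ∈ sᶜ, f x = ∑ᶠ x, f x := by
  rw [← finsum_mem_union' disjoint_compl_right (hf.subset Set.inter_subset_right)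
    (hf.subset Set.inter_subset_right), Set.union_compl_self, finsum_mem_univ]

lemma Pfun_top (x : ℝ) : Pfun x ⊤ = x := if_pos rfl

lemma Pfun_one_right (x : ℝ) : Pfun x 1 = 1 := by
  simp [Pfun, show (1 : EReal) ≠ ⊤ from EReal.coe_ne_top 1]

lemma Pfun_one_left (α : EReal) : Pfun 1 α = 1 := by
  unfold Pfun
  split_ifs with h₁ h₂
  · rfl
  · rfl
  · have : 2 ≤ α.toReal := not_lt.mp h₂
    rw [one_mul, show 1 + α.toReal - 2 = α.toReal - 1 by ring, div_self (by linarith)]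

lemma Pfun_coe {a : ℝ} (x : ℝ) (ha : 2 ≤ a) : Pfun x a = (a - 1) * x / (x + a - 2) := by
  rw [Pfun, if_neg (EReal.coe_ne_top a), EReal.toReal_coe, if_neg ha.not_gt]
  ring

lemma Pfun_zero_coe {a : ℝ} (ha : 2 ≤ a) : Pfun 0 a = 0 := by
  simp [Pfun_coe 0 ha]

lemma Pfun_coe_nonneg {a x : ℝ} (ha : 2 ≤ a) (hx : 0 ≤ x) : 0 ≤ Pfun x a := by
  rw [Pfun_coe x ha]
  apply div_nonneg <;> nlinarith

namespace IsValid1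

variable {f : ℝ → ℝ}

lemma prof1_one (hf : IsValid1 f) : prof1 f 1 = 0 := by
  simpa [prof1, Pfun_one_right] using hf.1

lemma prof1_top_nonneg (hf : IsValid1 f) : 0 ≤ prof1 f ⊤ := by
  simpa [prof1, Pfun_top, mul_comm] using hf.2.2

lemma prof1_coe_nonneg (hf : IsValid1 f) {a : ℝ} (ha : 2 < a) : 0 ≤ prof1 f a := by
  have h : prof1 f a = (a - 1) * ∑ᶠ x, x / (x + (a - 2)) * f x := by
    rw [prof1, mul_finsum]
    congr 1; ext x
    rw [Pfun_coe x ha.le]; ring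
  rw [h]
  exact mul_nonneg (by linarith) (hf.2.1 _ (by linarith))

end IsValid1

def rowProf (g : ℝ × ℝ → ℝ) (α : EReal) (y : ℝ) : ℝ := prof1 (fun x => g (x, y)) α

section TwoDim

variable {g : ℝ × ℝ → ℝ}

lemma finite_support_rowProf (hg : (support g).Finite) (α : EReal) :
    (support (rowProf g α)).Finite := by
  refine (hg.image Prod.snd).subset fun y hy => ?_
  by_contra hrow
  refine hy (finsum_eq_zero_of_forall_eq_zero fun x => ?_)
  have : g (x, y) = 0 := by_contra fun hx => hrow ⟨(x, y), hx, rfl⟩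
  simp [this]

lemma prof2_eq_finsum_rowProf (hg : (support g).Finite) (α β : EReal) :
    prof2 g α β = ∑ᶠ y, Pfun y β * rowProf g α y := by
  have hfin : (support fun q : ℝ × ℝ => g q.swap * Pfun q.2 α * Pfun q.1 β).Finite :=
    (hg.preimage Prod.swap_injective.injOn).subset fun q hq => left_ne_zero_of_mul
      (left_ne_zero_of_mul hq)
  rw [prof2, ← finsum_comp_equiv (Equiv.prodComm ℝ ℝ)]
  simp only [Equiv.coe_prodComm, Prod.fst_swap, Prod.snd_swap]
  rw [finsum_curry _ hfin]
  congr 1; ext y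
  rw [rowProf, prof1, mul_finsum]
  congr 1; ext x
  simp only [Prod.swap_prod_mk]; ring

lemma prof2_hslice (hg : (support g).Finite) (b : ℝ) (α β : EReal) :
    prof2 (hslice g b) α β = Pfun b β * rowProf g α b := by
  rw [prof2_eq_finsum_rowProf (hg.subset fun p hp => ?_), finsum_eq_single _ b fun y hy => ?_]
  · simp [rowProf, hslice]
  · simp [rowProf, prof1, hslice, hy]
  · by_contra h
    exact hp (by simp [hslice, show g p = 0 from not_not.mp h])

lemma prof2_transpose (α β : EReal) : prof2 (transpose g) α β = prof2 g β α := by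
  rw [prof2, prof2, ← finsum_comp_equiv (Equiv.prodComm ℝ ℝ)]
  congr 1; ext p
  simp only [transpose, Equiv.coe_prodComm, Prod.fst_swap, Prod.snd_swap, Prod.mk.eta]
  ring

@[fun_prop]
lemma hasFiniteSupport_pt_mul (x y : ℝ) (F : ℝ × ℝ → ℝ) :
    HasFiniteSupport fun p => pt x y p * F p :=
  (Set.finite_singleton (x, y)).subset fun p hp => by
    by_contra h
    exact hp (by simp [pt, show p ≠ (x, y) from h])

lemma finsum_pt_mul (x y : ℝ) (F : ℝ × ℝ → ℝ) : ∑ᶠ p, pt x y p * F p = F (x, y) := by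
  rw [finsum_eq_single _ (x, y) fun p hp => by simp [pt, hp]]
  simp [pt]

lemma prof2_tMove (τ : ℝ) (α β : EReal) :
    prof2 (tMove τ) α β =
      2 * Pfun 1 α * Pfun 1 β - Pfun (2 - τ) α * Pfun 0 β - Pfun 0 α * Pfun (2 - τ) β := by
  set F : ℝ × ℝ → ℝ := fun p => Pfun p.1 α * Pfun p.2 β
  have h : ∀ p, tMove τ p * Pfun p.1 α * Pfun p.2 β =
      2 * (pt 1 1 p * F p) - pt (2 - τ) 0 p * F p - pt 0 (2 - τ) p * F p := by
    intro p; simp only [tMove, F]; ring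
  rw [prof2, finsum_congr h, finsum_sub_distrib, finsum_sub_distrib, ← mul_finsum,
    finsum_pt_mul, finsum_pt_mul, finsum_pt_mul]
  · simp only [F]; ring
  all_goals fun_prop

end TwoDim

section Symmetric

variable {g : ℝ × ℝ → ℝ} {τ : ℝ}

lemma prof2_add_prof2_swap (hg : (support g).Finite)
    (hsym : ∀ p, g p + transpose g p = tMove τ p) (α β : EReal) :
    prof2 g α β + prof2 g β α = prof2 (tMove τ) α β := by
  have hg' : HasFiniteSupport g := hg
  have hgt : HasFiniteSupport (transpose g) := hg.preimage Prod.swap_injective.injOn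
  rw [← prof2_transpose (g := g) α β, prof2, prof2, prof2, ← finsum_add_distrib]
  · congr 1; ext p; rw [← hsym p]; ring
  · fun_prop
  · fun_prop

lemma IsMove2.rowProf_eq_zero (hg : IsMove2 g) {y : ℝ} (hy : y < 0) (α : EReal) :
    rowProf g α y = 0 := by
  simp [rowProf, prof1, hg.2 (_, y) (Or.inr hy)]

lemma HorizValid.rowProf_one (hval : HorizValid g) (y : ℝ) : rowProf g 1 y = 0 :=
  (hval y).prof1_one

variable (hg : IsMove2 g) (hsym : ∀ p, g p + transpose g p = tMove τ p)
include hg hsym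

lemma finsum_Pfun_mul_rowProf {a : ℝ} (ha : 2 ≤ a) :
    ∑ᶠ y, Pfun y a * rowProf g a y = 1 := by
  have h := prof2_add_prof2_swap hg.1 hsym a a
  rw [prof2_tMove, Pfun_one_left, Pfun_zero_coe ha, prof2_eq_finsum_rowProf hg.1] at h
  linarith

lemma finsum_rowProf (hval : HorizValid g) {a : ℝ} (ha : 2 ≤ a) :
    ∑ᶠ y, rowProf g a y = 2 - Pfun (2 - τ) a := by
  have h := prof2_add_prof2_swap hg.1 hsym a 1
  rw [prof2_tMove, prof2_eq_finsum_rowProf hg.1, prof2_eq_finsum_rowProf hg.1] at h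
  simp only [Pfun_one_left, Pfun_one_right, Pfun_zero_coe ha, one_mul, hval.rowProf_one,
    mul_zero, finsum_zero] at h
  linarith

lemma finsum_mul_rowProf_le (hval : HorizValid g) {a : ℝ} (ha : 2 ≤ a) :
    ∑ᶠ y, y * rowProf g a y ≤ 2 := by
  have h := prof2_add_prof2_swap hg.1 hsym a ⊤
  rw [prof2_tMove, prof2_eq_finsum_rowProf hg.1, prof2_eq_finsum_rowProf hg.1] at h
  simp only [Pfun_one_left, Pfun_top, Pfun_zero_coe ha] at h
  have hnonneg : 0 ≤ ∑ᶠ y, Pfun y a * rowProf g ⊤ y := by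
    refine finsum_nonneg fun y => ?_
    rcases lt_or_ge y 0 with hy | hy
    · rw [hg.rowProf_eq_zero hy, mul_zero]
    · exact mul_nonneg (Pfun_coe_nonneg ha hy) (hval y).prof1_top_nonneg
  linarith

end Symmetric

/-- The tangent line at `b = a` of the concave function `b ↦ P_b(a)`, minus that function. -/
def tangentGap (a b : ℝ) : ℝ := (a ^ 2 + (a - 2) * b) / (4 * (a - 1)) - Pfun b a

section TangentGap

variable {a b : ℝ}

lemma tangentGap_eq (ha : 2 < a) (hb : 0 ≤ b) :
    tangentGap a b = (a - 2) * (b - a) ^ 2 / (4 * (a - 1) * (b + a - 2)) := by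
  have h₁ : a - 1 ≠ 0 := by linarith
  have h₂ : b + a - 2 ≠ 0 := by linarith
  rw [tangentGap, Pfun_coe b ha.le]
  field_simp
  ring

lemma tangentGap_nonneg (ha : 2 < a) (hb : 0 ≤ b) : 0 ≤ tangentGap a b := by
  rw [tangentGap_eq ha hb]
  apply div_nonneg (mul_nonneg (by linarith) (sq_nonneg _))
  nlinarith

lemma Pfun_le_mul_tangentGap {δ : ℝ} (ha₃ : 3 ≤ a) (ha₅ : a ≤ 5) (hb : 0 ≤ b) (hδ : 0 < δ)
    (hbδ : δ ≤ |b - a|) : Pfun b a ≤ 64 * (5 / δ ^ 2 + 1 / δ) * tangentGap a b := by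
  have hsq : δ ^ 2 ≤ (b - a) ^ 2 := by
    rw [← sq_abs (b - a)]
    exact pow_le_pow_left₀ hδ.le hbδ 2
  have hb_le : b ≤ (5 / δ ^ 2 + 1 / δ) * (b - a) ^ 2 := by
    have h₅ : 5 ≤ 5 / δ ^ 2 * (b - a) ^ 2 := by
      rw [div_mul_eq_mul_div, le_div_iff₀ (by positivity)]
      linarith
    have h₁ : |b - a| ≤ 1 / δ * (b - a) ^ 2 := by
      rw [one_div_mul_eq_div, le_div_iff₀ hδ, ← sq_abs, sq]
      gcongr
    nlinarith [le_abs_self (b - a)]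
  have hpos : 0 < b + a - 2 := by linarith
  rw [Pfun_coe b (by linarith), tangentGap_eq (by linarith) hb,
    show 64 * (5 / δ ^ 2 + 1 / δ) * ((a - 2) * (b - a) ^ 2 / (4 * (a - 1) * (b + a - 2)))
      = 64 * (a - 2) * ((5 / δ ^ 2 + 1 / δ) * (b - a) ^ 2) / (4 * (a - 1)) / (b + a - 2) by
        field_simp]
  gcongr
  rw [le_div_iff₀ (by linarith)]
  calc (a - 1) * b * (4 * (a - 1)) = 4 * (a - 1) ^ 2 * b := by ring
    _ ≤ 64 * (a - 2) * b := mul_le_mul_of_nonneg_right (by nlinarith) hb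
    _ ≤ 64 * (a - 2) * ((5 / δ ^ 2 + 1 / δ) * (b - a) ^ 2) := by gcongr; linarith

end TangentGap

section Concentration

variable {g : ℝ × ℝ → ℝ} {τ a : ℝ} (hg : IsMove2 g) (hval : HorizValid g)
  (hsym : ∀ p, g p + transpose g p = tMove τ p)
include hg hval hsym

lemma finsum_tangentGap_mul_rowProf_le (ha : 2 < a) (hτa : τ < a) :
    ∑ᶠ y, tangentGap a y * rowProf g a y ≤ a * (a - 2) * τ / (4 * (a - τ)) := by
  have hfin : HasFiniteSupport (rowProf g a) := finite_support_rowProf hg.1 a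
  have hdecomp : ∑ᶠ y, tangentGap a y * rowProf g a y
      = a ^ 2 / (4 * (a - 1)) * ∑ᶠ y, rowProf g a y
        + (a - 2) / (4 * (a - 1)) * ∑ᶠ y, y * rowProf g a y
        - ∑ᶠ y, Pfun y a * rowProf g a y := by
    rw [mul_finsum, mul_finsum, ← finsum_add_distrib, ← finsum_sub_distrib]
    · congr 1; ext y; unfold tangentGap; ring
    all_goals fun_prop
  have hslope : 0 ≤ (a - 2) / (4 * (a - 1)) := div_nonneg (by linarith) (by linarith)
  have hfirst := mul_le_mul_of_nonneg_left (finsum_mul_rowProf_le hg hsym hval ha.le) hslope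
  have hvalue : a ^ 2 / (4 * (a - 1)) * (2 - Pfun (2 - τ) a) + (a - 2) / (4 * (a - 1)) * 2 - 1
      = a * (a - 2) * τ / (4 * (a - τ)) := by
    have h₁ : a - 1 ≠ 0 := by linarith
    have h₂ : a - τ ≠ 0 := by linarith
    rw [Pfun_coe _ ha.le, show 2 - τ + a - 2 = a - τ by ring]
    field_simp
    ring
  rw [hdecomp, finsum_rowProf hg hsym hval ha.le, finsum_Pfun_mul_rowProf hg hsym ha.le]
  linarith

lemma finsum_mem_far_Pfun_mul_rowProf_le (ha₃ : 3 ≤ a) (ha₅ : a ≤ 5) (hτa : τ < a) {δ : ℝ}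
    (hδ : 0 < δ) :
    ∑ᶠ b ∈ {b | |b - a| < δ}ᶜ, Pfun b a * rowProf g a b
      ≤ 64 * (5 / δ ^ 2 + 1 / δ) * (a * (a - 2) * τ / (4 * (a - τ))) := by
  set K := 64 * (5 / δ ^ 2 + 1 / δ)
  have hfin : HasFiniteSupport (rowProf g a) := finite_support_rowProf hg.1 a
  have hgap : ∀ y, 0 ≤ tangentGap a y * rowProf g a y := fun y => by
    rcases lt_or_ge y 0 with hy | hy
    · simp [hg.rowProf_eq_zero hy]
    · exact mul_nonneg (tangentGap_nonneg (by linarith) hy)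
        ((hval y).prof1_coe_nonneg (by linarith))
  calc ∑ᶠ b ∈ {b | |b - a| < δ}ᶜ, Pfun b a * rowProf g a b
      ≤ ∑ᶠ b, K * (tangentGap a b * rowProf g a b) := by
        rw [finsum_mem_def]
        refine finsum_le_finsum' ?_ (by fun_prop) fun y => ?_
        · rw [HasFiniteSupport, Set.support_indicator]
          exact hfin.subset (Set.inter_subset_right.trans (support_mul_subset_right _ _))
        · by_cases hy : y ∈ {b | |b - a| < δ}ᶜ
          · rw [Set.indicator_of_mem hy]
            rcases lt_or_ge y 0 with hy₀ | hy₀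
            · simp [hg.rowProf_eq_zero hy₀]
            · rw [← mul_assoc]
              exact mul_le_mul_of_nonneg_right
                (Pfun_le_mul_tangentGap ha₃ ha₅ hy₀ hδ (not_lt.mp hy))
                ((hval y).prof1_coe_nonneg (by linarith))
          · rw [Set.indicator_of_notMem hy]
            exact mul_nonneg (by positivity) (hgap y)
    _ = K * ∑ᶠ b, tangentGap a b * rowProf g a b := (mul_finsum _ _).symm
    _ ≤ K * (a * (a - 2) * τ / (4 * (a - τ))) := by
        gcongr
        exact finsum_tangentGap_mul_rowProf_le hg hval hsym (by linarith) hτa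

end Concentration

lemma far_mass_bound_le_one_third {τ a : ℝ} (hτ₀ : 0 < τ) (hτ₁ : τ < 1) (ha₃ : 3 ≤ a)
    (ha₅ : a ≤ 5) :
    64 * (5 / (1000 * √τ) ^ 2 + 1 / (1000 * √τ)) * (a * (a - 2) * τ / (4 * (a - τ))) ≤ 1 / 3 := by
  have hδ : 0 < 1000 * √τ := by positivity
  have hτδ : τ / (1000 * √τ) ^ 2 = 1 / 1000000 := by
    rw [mul_pow, Real.sq_sqrt hτ₀.le]
    field_simp
    norm_num
  have hτδ' : τ / (1000 * √τ) ≤ 1 / 1000 := by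
    rw [div_le_iff₀ hδ]
    nlinarith [Real.sq_sqrt hτ₀.le, Real.sqrt_le_one.mpr hτ₁.le, Real.sqrt_nonneg τ]
  have hE : a * (a - 2) * τ / (4 * (a - τ)) ≤ 15 / 8 * τ := by
    rw [div_le_iff₀ (by linarith)]
    nlinarith [mul_nonneg (mul_nonneg (sub_nonneg.2 ha₅) (by linarith : 0 ≤ a + 3)) hτ₀.le,
      mul_nonneg hτ₀.le (sub_nonneg.2 ha₃), mul_pos hτ₀ (sub_pos.2 hτ₁)]
  calc 64 * (5 / (1000 * √τ) ^ 2 + 1 / (1000 * √τ)) * (a * (a - 2) * τ / (4 * (a - τ)))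
      ≤ 64 * (5 / (1000 * √τ) ^ 2 + 1 / (1000 * √τ)) * (15 / 8 * τ) := by gcongr
    _ = 120 * (5 * (τ / (1000 * √τ) ^ 2) + τ / (1000 * √τ)) := by ring
    _ ≤ 1 / 3 := by rw [hτδ]; linarith

/-- The isolating function: there is a universal constant `C > 0` such that
for every `τ ∈ (0,1)`, every horizontally valid move `g` with `g + gᵀ = t_τ`,
and every `a ∈ [3,5]`, the slices `g_b` with `|b - a| < C√τ` contribute at
least `2/3` to `ĝ(a,a)`. -/
theorem stmt_16 :
    ∃ C : ℝ, 0 < C ∧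
      ∀ τ : ℝ, τ ∈ Set.Ioo (0 : ℝ) 1 →
      ∀ g : ℝ × ℝ → ℝ, IsMove2 g → HorizValid g →
        (∀ p, g p + transpose g p = tMove τ p) →
      ∀ a : ℝ, 3 ≤ a → a ≤ 5 →
        (2 / 3 : ℝ) ≤
          ∑ᶠ b ∈ {b : ℝ | |b - a| < C * Real.sqrt τ},
            prof2 (hslice g b) ((a : ℝ) : EReal) ((a : ℝ) : EReal) := by
  refine ⟨1000, by norm_num, ?_⟩
  rintro τ ⟨hτ₀, hτ₁⟩ g hg hval hsym a ha₃ ha₅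
  have hf : HasFiniteSupport fun b => Pfun b a * rowProf g a b :=
    (finite_support_rowProf hg.1 a).subset (support_mul_subset_right _ _)
  have htotal := finsum_mem_add_finsum_mem_compl hf {b | |b - a| < 1000 * √τ}
  rw [finsum_Pfun_mul_rowProf hg hsym (by linarith)] at htotal
  have hfar := finsum_mem_far_Pfun_mul_rowProf_le hg hval hsym ha₃ ha₅ (by linarith)
    (δ := 1000 * √τ) (by positivity)
  have hbound := far_mass_bound_le_one_third hτ₀ hτ₁ ha₃ ha₅
  rw [finsum_mem_congr rfl fun b _ => prof2_hslice hg.1 b a a]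
  linarith

end
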